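/- arXiv:0712.3840 — 4 statements merged into one kernel-verified Lean document; each statement's English description precedes it below -/
import Mathlib

section
/- Let U = (u,v) be harmonic in the unit disk B, C¹ up to the boundary, with det DU > 0 on ∂B. For α ∈ [0,2π] set u_α = cos(α)·u + sin(α)·v and let M_α be the sum of the multiplicities of the critical points of u_α in B. Then M_α is finite and M_α = M_0 for every α. -/
open Complex Metric Set MeasureTheory Filter

noncomputable def pd2 (u : ℂ → ℝ) (w z : ℂ) : ℝ :=
  fderiv ℝ (fun x => fderiv ℝ u x w) z w

def HarmOn (u : ℂ → ℝ) (s : Set ℂ) : Prop :=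
  ContDiffOn ℝ 2 u s ∧ ∀ z ∈ s, pd2 u 1 z + pd2 u Complex.I z = 0

def HarmMapOn (U : ℂ → ℂ) (s : Set ℂ) : Prop :=
  HarmOn (fun z => (U z).re) s ∧ HarmOn (fun z => (U z).im) s

noncomputable def jacDet (U : ℂ → ℂ) (z : ℂ) : ℝ :=
  LinearMap.det ((fderivWithin ℝ U (closedBall (0:ℂ) 1) z) : ℂ →ₗ[ℝ] ℂ)

noncomputable def jacDetB (U : ℂ → ℂ) (z : ℂ) : ℝ :=
  LinearMap.det ((fderiv ℝ U z) : ℂ →ₗ[ℝ] ℂ)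

def IsHomeoOnto (U : ℂ → ℂ) (s t : Set ℂ) : Prop :=
  ∃ h : s ≃ₜ t, ∀ z : s, (h z : ℂ) = U (z : ℂ)

def IsDiffeoOnto (U : ℂ → ℂ) (t : Set ℂ) : Prop :=
  ContDiffOn ℝ 1 U (closedBall (0:ℂ) 1) ∧ IsHomeoOnto U (closedBall (0:ℂ) 1) t ∧
    ∀ z ∈ closedBall (0:ℂ) 1, jacDet U z ≠ 0

def WindsOnce (c : ℝ → ℂ) (w : ℂ) : Prop :=
  ∃ a : ℝ → ℝ, Continuous a ∧
    (∀ θ : ℝ, c θ - w = (‖c θ - w‖ : ℂ) * Complex.exp ((a θ : ℂ) * Complex.I)) ∧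
    a (2 * Real.pi) = a 0 + 2 * Real.pi

def TangentWinding (c : ℝ → ℂ) (n : ℤ) : Prop :=
  ∃ a : ℝ → ℝ, Continuous a ∧
    (∀ θ : ℝ, deriv c θ = (‖deriv c θ‖ : ℂ) * Complex.exp ((a θ : ℂ) * Complex.I)) ∧
    a (2 * Real.pi) = a 0 + (n : ℝ) * (2 * Real.pi)

def VanishOrder (f : ℂ → ℂ) (z : ℂ) (n : ℕ) : Prop :=
  ∃ h : ℂ → ℂ, AnalyticAt ℂ h z ∧ h z ≠ 0 ∧ ∀ᶠ w in nhds z, f w = (w - z) ^ n * h w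

noncomputable def gradC (u : ℂ → ℝ) (z : ℂ) : ℂ :=
  (fderiv ℝ u z 1 : ℂ) - (fderiv ℝ u z Complex.I : ℂ) * Complex.I

def CritSum (u : ℂ → ℝ) (M : ℕ) : Prop :=
  ∃ (S : Finset ℂ) (m : ℂ → ℕ),
    (↑S : Set ℂ) = {z | z ∈ ball (0:ℂ) 1 ∧ fderiv ℝ u z = 0} ∧
    (∀ z ∈ S, VanishOrder (gradC u) z (m z)) ∧ ∑ z ∈ S, m z = M

def LocalHomeoAt (U : ℂ → ℂ) (P : ℂ) : Prop :=
  ∃ G ∈ nhds P, Set.InjOn U (G ∩ closedBall (0:ℂ) 1)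

def IsConjOn (u v : ℂ → ℝ) (s : Set ℂ) : Prop :=
  DifferentiableOn ℝ v s ∧ ∀ z ∈ s,
    fderiv ℝ v z 1 = -(fderiv ℝ u z Complex.I) ∧ fderiv ℝ v z Complex.I = fderiv ℝ u z 1

def HilbertPV (g : ℝ → ℝ) (θ L : ℝ) : Prop :=
  Tendsto (fun ε : ℝ =>
      (1 / (2 * Real.pi)) *
        ∫ τ in Ioo (θ - Real.pi) (θ + Real.pi) \ Ioo (θ - ε) (θ + ε),
          g τ / Real.tan ((θ - τ) / 2))
    (nhdsWithin 0 (Ioi 0)) (nhds L)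

noncomputable def wderivZ (U : ℂ → ℂ) (z : ℂ) : ℂ :=
  (fderivWithin ℝ U (closedBall (0:ℂ) 1) z 1 -
    Complex.I * fderivWithin ℝ U (closedBall (0:ℂ) 1) z Complex.I) / 2

noncomputable def wderivZbar (U : ℂ → ℂ) (z : ℂ) : ℂ :=
  (fderivWithin ℝ U (closedBall (0:ℂ) 1) z 1 +
    Complex.I * fderivWithin ℝ U (closedBall (0:ℂ) 1) z Complex.I) / 2

noncomputable def angDeriv (u : ℂ → ℝ) (τ : ℝ) : ℝ :=
  fderivWithin ℝ u (closedBall (0:ℂ) 1) (Complex.exp ((τ : ℂ) * Complex.I))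
    (Complex.I * Complex.exp ((τ : ℂ) * Complex.I))

noncomputable def radDeriv (u : ℂ → ℝ) (θ : ℝ) : ℝ :=
  fderivWithin ℝ u (closedBall (0:ℂ) 1) (Complex.exp ((θ : ℂ) * Complex.I))
    (Complex.exp ((θ : ℂ) * Complex.I))


open Topology
open scoped Real

/-! Write `A = ∂U/∂z` and `B = conj (∂U/∂z̄)`; both are holomorphic because `u` and `v` are
harmonic. The complex gradient `∂u_α/∂x - i ∂u_α/∂y` equals `e^{-iα} (A + e^{2iα} B)`, and
`det DU = |A|² - |B|²`. Positivity of the Jacobian near the unit circle gives `|B| < |A|` on an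
annulus `r ≤ |z| < 1`, so `A + e^{it} B` has no zeros there; its zeros in the disk are then
finitely many, and by the argument principle their number counted with multiplicity is
`(2πi)⁻¹ ∮_{|z| = r} (A + e^{it} B)' / (A + e^{it} B)`. This integral depends continuously on `t`
and takes values in `ℕ`, so it does not depend on `t`. -/

lemma pd2_eq_iteratedFDeriv {u : ℂ → ℝ} {z : ℂ} (hu : ContDiffAt ℝ 2 u z) (w : ℂ) :
    pd2 u w z = iteratedFDeriv ℝ 2 u z ![w, w] := by
  have hd : DifferentiableAt ℝ (fderiv ℝ u) z :=
    (hu.fderiv_right (m := 1) (by norm_num)).differentiableAt one_ne_zero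
  simp [pd2, iteratedFDeriv_two_apply, fderiv_clm_apply hd (differentiableAt_const w)]

lemma HarmOn.harmonicOnNhd {u : ℂ → ℝ} {s : Set ℂ} (hu : HarmOn u s) (hs : IsOpen s) :
    InnerProductSpace.HarmonicOnNhd u s := by
  intro z hz
  refine ⟨hu.1.contDiffAt (hs.mem_nhds hz), ?_⟩
  filter_upwards [hs.mem_nhds hz] with y hy
  simpa [InnerProductSpace.laplacian_eq_iteratedFDeriv_complexPlane,
    ← pd2_eq_iteratedFDeriv (hu.1.contDiffAt (hs.mem_nhds hy))] using hu.2 y hy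

lemma HarmOn.differentiableOn_gradC {u : ℂ → ℝ} {s : Set ℂ} (hu : HarmOn u s) (hs : IsOpen s) :
    DifferentiableOn ℂ (gradC u) s := by
  intro z hz
  have := HarmonicAt.differentiableAt_complex_partial (hu.harmonicOnNhd hs z hz)
  refine DifferentiableAt.differentiableWithinAt ?_
  convert this using 2 with w
  simp [gradC, mul_comm]

lemma gradC_eq_zero_iff {u : ℂ → ℝ} {z : ℂ} : gradC u z = 0 ↔ fderiv ℝ u z = 0 := by
  refine ⟨fun h => ?_, fun h => by simp [gradC, h]⟩
  have h1 : fderiv ℝ u z 1 = 0 := by simpa [gradC] using congrArg Complex.re h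
  have hI : fderiv ℝ u z I = 0 := by simpa [gradC] using congrArg Complex.im h
  refine ContinuousLinearMap.coe_injective (Complex.basisOneI.ext fun i => ?_)
  fin_cases i <;> simpa

lemma gradC_const_mul_add_const_mul {u v : ℂ → ℝ} {z : ℂ} (hu : DifferentiableAt ℝ u z)
    (hv : DifferentiableAt ℝ v z) (a b : ℝ) :
    gradC (fun w => a * u w + b * v w) z = a * gradC u z + b * gradC v z := by
  simp only [gradC, fderiv_fun_add (hu.const_mul a) (hv.const_mul b), fderiv_const_mul hu,
    fderiv_const_mul hv, add_apply, smul_apply, smul_eq_mul]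
  push_cast
  ring

/-- `derivH U` and `derivG U` are `∂U/∂z` and the conjugate of `∂U/∂z̄`, i.e. `h'` and `g'` in the
decomposition `U = h + conj g` of a harmonic map. -/
noncomputable def derivH (U : ℂ → ℂ) (z : ℂ) : ℂ :=
  (gradC (fun w => (U w).re) z + I * gradC (fun w => (U w).im) z) / 2

noncomputable def derivG (U : ℂ → ℂ) (z : ℂ) : ℂ :=
  (gradC (fun w => (U w).re) z - I * gradC (fun w => (U w).im) z) / 2

lemma HarmMapOn.differentiableOn_derivH {U : ℂ → ℂ} {s : Set ℂ} (hU : HarmMapOn U s)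
    (hs : IsOpen s) : DifferentiableOn ℂ (derivH U) s :=
  ((hU.1.differentiableOn_gradC hs).add
    ((hU.2.differentiableOn_gradC hs).const_mul I)).div_const 2

lemma HarmMapOn.differentiableOn_derivG {U : ℂ → ℂ} {s : Set ℂ} (hU : HarmMapOn U s)
    (hs : IsOpen s) : DifferentiableOn ℂ (derivG U) s :=
  ((hU.1.differentiableOn_gradC hs).sub
    ((hU.2.differentiableOn_gradC hs).const_mul I)).div_const 2

lemma gradC_cos_mul_add_sin_mul {U : ℂ → ℂ} {z : ℂ} (hU : DifferentiableAt ℝ U z) (α : ℝ) :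
    gradC (fun w => Real.cos α * (U w).re + Real.sin α * (U w).im) z =
      exp (-α * I) * (derivH U z + exp ((2 * α : ℝ) * I) * derivG U z) := by
  have hre : DifferentiableAt ℝ (fun w => (U w).re) z := reCLM.differentiableAt.comp z hU
  have him : DifferentiableAt ℝ (fun w => (U w).im) z := imCLM.differentiableAt.comp z hU
  rw [gradC_const_mul_add_const_mul hre him, derivH, derivG, mul_add, ← mul_assoc, ← exp_add]
  have h2 : -(α : ℂ) * I + (2 * α : ℝ) * I = α * I := by push_cast; ring
  rw [h2, exp_mul_I, exp_mul_I, cos_neg, sin_neg, ← ofReal_cos, ← ofReal_sin]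
  linear_combination (Real.sin α * gradC (fun w => (U w).im) z) * I_sq

lemma gradC_re_comp {U : ℂ → ℂ} {z : ℂ} (hU : DifferentiableAt ℝ U z) :
    gradC (fun w => (U w).re) z = (fderiv ℝ U z 1).re - (fderiv ℝ U z I).re * I := by
  have h : HasFDerivAt (fun w => (U w).re) (reCLM.comp (fderiv ℝ U z)) z :=
    reCLM.hasFDerivAt.comp z hU.hasFDerivAt
  simp [gradC, h.fderiv]

lemma gradC_im_comp {U : ℂ → ℂ} {z : ℂ} (hU : DifferentiableAt ℝ U z) :
    gradC (fun w => (U w).im) z = (fderiv ℝ U z 1).im - (fderiv ℝ U z I).im * I := by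
  have h : HasFDerivAt (fun w => (U w).im) (imCLM.comp (fderiv ℝ U z)) z :=
    imCLM.hasFDerivAt.comp z hU.hasFDerivAt
  simp [gradC, h.fderiv]

lemma LinearMap.det_complex (L : ℂ →ₗ[ℝ] ℂ) :
    LinearMap.det L = (L 1).re * (L I).im - (L 1).im * (L I).re := by
  rw [← LinearMap.det_toMatrix basisOneI, Matrix.det_fin_two]
  simp [LinearMap.toMatrix_apply, coe_basisOneI_repr, coe_basisOneI]
  ring

lemma jacDetB_eq_norm_derivH_sq_sub_norm_derivG_sq {U : ℂ → ℂ} {z : ℂ}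
    (hU : DifferentiableAt ℝ U z) : jacDetB U z = ‖derivH U z‖ ^ 2 - ‖derivG U z‖ ^ 2 := by
  rw [jacDetB, LinearMap.det_complex, derivH, derivG, gradC_re_comp hU, gradC_im_comp hU,
    Complex.sq_norm, Complex.sq_norm]
  simp [normSq_apply]
  ring

lemma jacDet_eq_jacDetB {U : ℂ → ℂ} {z : ℂ} (hz : z ∈ ball (0 : ℂ) 1) :
    jacDet U z = jacDetB U z := by
  rw [jacDet, jacDetB, fderivWithin_of_mem_nhds (closedBall_mem_nhds_of_mem hz)]

lemma continuousOn_jacDet {U : ℂ → ℂ} (hU : ContDiffOn ℝ 1 U (closedBall (0 : ℂ) 1)) :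
    ContinuousOn (jacDet U) (closedBall (0 : ℂ) 1) :=
  ContinuousLinearMap.continuous_det.comp_continuousOn (hU.continuousOn_fderivWithin
    (uniqueDiffOn_convex (convex_closedBall 0 1) (by simp [interior_closedBall])) le_rfl)

lemma exists_radius_forall_pos_of_pos_on_sphere {f : ℂ → ℝ}
    (hf : ContinuousOn f (closedBall (0 : ℂ) 1)) (hpos : ∀ z ∈ sphere (0 : ℂ) 1, 0 < f z) :
    ∃ r ∈ Ioo (0 : ℝ) 1, ∀ z ∈ closedBall (0 : ℂ) 1, r ≤ ‖z‖ → 0 < f z := by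
  set K := closedBall (0 : ℂ) 1 ∩ f ⁻¹' Iic 0
  have hK : IsCompact K := (isCompact_closedBall 0 1).of_isClosed_subset
    (hf.preimage_isClosed_of_isClosed isClosed_closedBall isClosed_Iic) inter_subset_left
  have hK1 : ∀ z ∈ K, 0 < 1 - ‖z‖ := fun z ⟨hz, hfz⟩ => by
    rcases (mem_closedBall_zero_iff.1 hz).lt_or_eq with h | h
    · linarith
    · exact absurd hfz (not_le.2 (hpos z (mem_sphere_zero_iff_norm.2 h)))
  obtain ⟨δ, hδ, hδK⟩ :=
    hK.exists_forall_le' (continuous_const.sub continuous_norm).continuousOn hK1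
  refine ⟨max (1 - δ / 2) (1 / 2), ⟨by positivity, max_lt (by linarith) (by norm_num)⟩,
    fun z hz hrz => ?_⟩
  by_contra hfz
  have := hδK z ⟨hz, not_lt.1 hfz⟩
  simp only [Pi.sub_apply] at this
  linarith [le_max_left (1 - δ / 2) (1 / 2)]

lemma VanishOrder.exists_eq_pow_mul {f : ℂ → ℂ} {s : Set ℂ} (hf : DifferentiableOn ℂ f s)
    {a : ℂ} {n : ℕ} (ha : VanishOrder f a n) :
    ∃ g : ℂ → ℂ, DifferentiableOn ℂ g s ∧ g a ≠ 0 ∧ ∀ w, f w = (w - a) ^ n * g w := by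
  obtain ⟨h, hh, hha, hfh⟩ := ha
  set g : ℂ → ℂ := fun w => if w = a then h a else f w / (w - a) ^ n
  have hfg : ∀ w, f w = (w - a) ^ n * g w := fun w => by
    by_cases hw : w = a
    · simpa [g, hw] using hfh.self_of_nhds
    · simp [g, hw, mul_div_cancel₀ _ (pow_ne_zero n (sub_ne_zero.2 hw))]
  have hgh : g =ᶠ[𝓝 a] h := by
    filter_upwards [hfh] with w hw
    by_cases hwa : w = a
    · simp [g, hwa]
    · simp [g, hwa, hw, mul_div_cancel_left₀ _ (pow_ne_zero n (sub_ne_zero.2 hwa))]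
  refine ⟨g, fun w hw => ?_, by simpa [g] using hha, hfg⟩
  by_cases hwa : w = a
  · subst hwa
    exact (hh.differentiableAt.congr_of_eventuallyEq hgh).differentiableWithinAt
  · have hq : DifferentiableWithinAt ℂ (fun x => f x / (x - a) ^ n) s w :=
      (hf w hw).div (by fun_prop) (pow_ne_zero n (sub_ne_zero.2 hwa))
    refine hq.congr_of_eventuallyEq ?_ (by simp [g, hwa])
    filter_upwards [self_mem_nhdsWithin, mem_nhdsWithin_of_mem_nhds (isOpen_ne.mem_nhds hwa)]
      with x _ hxa
    simp [g, hxa]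

lemma VanishOrder.of_eq_pow_mul {f g : ℂ → ℂ} {a z : ℂ} {n m : ℕ}
    (hfg : ∀ w, f w = (w - a) ^ n * g w) (hza : z ≠ a) (hz : VanishOrder f z m) :
    VanishOrder g z m := by
  obtain ⟨h, hh, hhz, hfh⟩ := hz
  have hpow : ∀ w, w ≠ a → (w - a) ^ n ≠ 0 := fun w hw => pow_ne_zero n (sub_ne_zero.2 hw)
  refine ⟨fun w => h w / (w - a) ^ n, hh.div (by fun_prop) (hpow z hza),
    div_ne_zero hhz (hpow z hza), ?_⟩
  filter_upwards [hfh, isOpen_ne.mem_nhds hza] with w hw hwa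
  rw [mul_div_assoc', eq_div_iff (hpow w hwa), ← hw, hfg, mul_comm]

lemma logDeriv_sub_pow_mul {g : ℂ → ℂ} {a w : ℂ} (n : ℕ) (hwa : w ≠ a)
    (hg : DifferentiableAt ℂ g w) (hgw : g w ≠ 0) :
    logDeriv (fun z => (z - a) ^ n * g z) w = n / (w - a) + logDeriv g w := by
  have hsub : DifferentiableAt ℂ (fun z => z - a) w := by fun_prop
  rw [logDeriv_mul (f := fun z => (z - a) ^ n) w (pow_ne_zero n (sub_ne_zero.2 hwa)) hgw
    (hsub.pow n) hg, logDeriv_fun_pow hsub, logDeriv_apply, deriv_sub_const, deriv_id'']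
  ring

lemma circleIntegral_logDeriv_sub_pow_mul {c a : ℂ} {r R : ℝ} (hr : 0 ≤ r) (hrR : r < R)
    (ha : a ∈ ball c r) (n : ℕ) {g : ℂ → ℂ} (hg : DifferentiableOn ℂ g (ball c R))
    (hg0 : ∀ w ∈ sphere c r, g w ≠ 0) :
    ∮ z in C(c, r), logDeriv (fun z => (z - a) ^ n * g z) z =
      2 * π * I * n + ∮ z in C(c, r), logDeriv g z := by
  have hsR : sphere c r ⊆ ball c R := sphere_subset_closedBall.trans (closedBall_subset_ball hrR)
  have hsa : ∀ w ∈ sphere c r, w - a ≠ 0 := fun w hw => sub_ne_zero.2 <| by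
    rintro rfl; exact (mem_sphere.1 hw).not_lt (mem_ball.1 ha)
  have hsplit : EqOn (logDeriv fun z => (z - a) ^ n * g z)
      (fun w => (n : ℂ) * (w - a)⁻¹ + logDeriv g w) (sphere c r) := fun w hw => by
    rw [logDeriv_sub_pow_mul n (sub_ne_zero.1 (hsa w hw))
      (hg.differentiableAt (isOpen_ball.mem_nhds (hsR hw))) (hg0 w hw), div_eq_mul_inv]
  have hint₁ : CircleIntegrable (fun w => (n : ℂ) * (w - a)⁻¹) c r :=
    (continuousOn_const.mul ((continuousOn_id.sub continuousOn_const).inv₀ hsa)).circleIntegrable hr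
  have hint₂ : CircleIntegrable (logDeriv g) c r :=
    (((hg.deriv isOpen_ball).continuousOn.mono hsR).div (hg.continuousOn.mono hsR)
      hg0).circleIntegrable hr
  rw [circleIntegral.integral_congr hr hsplit, circleIntegral.integral_add hint₁ hint₂,
    circleIntegral.integral_const_mul, circleIntegral.integral_sub_inv_of_mem_ball ha]
  ring

theorem circleIntegral_logDeriv_eq_sum {c : ℂ} {r R : ℝ} (hr : 0 ≤ r) (hrR : r < R)
    (S : Finset ℂ) (m : ℂ → ℕ) {f : ℂ → ℂ} (hf : DifferentiableOn ℂ f (ball c R))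
    (hS : ∀ z ∈ ball c R, f z = 0 ↔ z ∈ S) (hSr : ↑S ⊆ ball c r)
    (hm : ∀ z ∈ S, VanishOrder f z (m z)) :
    ∮ z in C(c, r), logDeriv f z = 2 * π * I * ∑ z ∈ S, (m z : ℂ) := by
  induction S using Finset.induction generalizing f with
  | empty =>
    have hne : ∀ z ∈ ball c R, f z ≠ 0 := fun z hz h => by simpa using (hS z hz).1 h
    rw [Finset.sum_empty, mul_zero]
    exact DiffContOnCl.circleIntegral_eq_zero hr
      (((hf.deriv isOpen_ball).div hf hne).diffContOnCl_ball (closedBall_subset_ball hrR))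
  | @insert a S ha ih =>
    obtain ⟨g, hg, hga, hfg⟩ := (hm a (Finset.mem_insert_self a S)).exists_eq_pow_mul hf
    have hgS : ∀ z ∈ ball c R, g z = 0 ↔ z ∈ S := fun z hz => by
      by_cases hza : z = a
      · subst hza; simp [hga, ha]
      · simpa [hfg, hza, sub_eq_zero] using hS z hz
    have hSr' : ↑S ⊆ ball c r := fun z hz => hSr (Finset.mem_insert_of_mem hz)
    have hg0 : ∀ w ∈ sphere c r, g w ≠ 0 := fun w hw h => (mem_sphere.1 hw).not_lt <| mem_ball.1 <|
      hSr' <| (hgS w (sphere_subset_closedBall.trans (closedBall_subset_ball hrR) hw)).1 h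
    rw [show f = fun z => (z - a) ^ m a * g z from funext hfg,
      circleIntegral_logDeriv_sub_pow_mul hr hrR (hSr (Finset.mem_insert_self a S)) _ hg hg0,
      ih hg hgS hSr' fun z hz => (hm z (Finset.mem_insert_of_mem hz)).of_eq_pow_mul hfg
        (ne_of_mem_of_not_mem hz ha), Finset.sum_insert ha]
    ring

lemma vanishOrder_analyticOrderNatAt {f : ℂ → ℂ} {z : ℂ} (hf : AnalyticAt ℂ f z)
    (hz : analyticOrderAt f z ≠ ⊤) : VanishOrder f z (analyticOrderNatAt f z) := by
  obtain ⟨g, hg, hgz, hfg⟩ := hf.analyticOrderAt_ne_top.1 hz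
  exact ⟨g, hg, hgz, hfg.mono fun w hw => by simpa using hw⟩

theorem exists_finset_zeros_circleIntegral_logDeriv {f : ℂ → ℂ} {c : ℂ} {r R : ℝ} (hr : 0 ≤ r)
    (hrR : r < R) (hf : DifferentiableOn ℂ f (ball c R))
    (hne : ∀ z ∈ ball c R, r ≤ dist z c → f z ≠ 0) :
    ∃ S : Finset ℂ, (↑S : Set ℂ) = {z | z ∈ ball c R ∧ f z = 0} ∧
      (∀ z ∈ S, VanishOrder f z (analyticOrderNatAt f z)) ∧
      ∮ z in C(c, r), logDeriv f z = 2 * π * I * ∑ z ∈ S, (analyticOrderNatAt f z : ℂ) := by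
  have hfa : AnalyticOnNhd ℂ f (ball c R) := hf.analyticOnNhd isOpen_ball
  have hp : c + r ∈ ball c R := by simpa [abs_of_nonneg hr] using hrR
  have hfp : f (c + r) ≠ 0 := hne _ hp (by simp [abs_of_nonneg hr])
  have hzeros : {z | z ∈ ball c R ∧ f z = 0} ⊆ ball c r := fun z ⟨hz, hfz⟩ =>
    mem_ball.2 (not_le.1 fun h => hne z hz h hfz)
  have hfin : {z | z ∈ ball c R ∧ f z = 0}.Finite := by
    have hcod := Filter.codiscreteWithin_mono (closedBall_subset_ball hrR)
      (hfa.preimage_zero_mem_codiscreteWithin hfp hp (isConnected_ball (by linarith)))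
    refine ((isCompact_closedBall c r).finite_sdiff_of_mem_codiscreteWithin hcod).subset ?_
    exact fun z hz => ⟨ball_subset_closedBall (hzeros hz), by simpa using hz.2⟩
  have hord : ∀ z ∈ ball c R, analyticOrderAt f z ≠ ⊤ := fun z hz =>
    hfa.analyticOrderAt_ne_top_of_isPreconnected (convex_ball c R).isPreconnected hp hz
      (by simp [analyticOrderAt_eq_zero.2 (Or.inr hfp)])
  refine ⟨hfin.toFinset, by simp, fun z hz => ?_, ?_⟩
  · have hz' := (hfin.mem_toFinset.1 hz).1
    exact vanishOrder_analyticOrderNatAt (hfa z hz') (hord z hz')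
  · refine circleIntegral_logDeriv_eq_sum hr hrR _ _ hf (fun z hz =>
      ⟨fun h => hfin.mem_toFinset.2 ⟨hz, h⟩, fun h => (hfin.mem_toFinset.1 h).2⟩) ?_ ?_
    · simpa using hzeros
    · intro z hz
      have hz' := (hfin.mem_toFinset.1 hz).1
      exact vanishOrder_analyticOrderNatAt (hfa z hz') (hord z hz')

lemma continuous_circleIntegral {X E : Type*} [TopologicalSpace X] [NormedAddCommGroup E]
    [NormedSpace ℂ E] {F : X → ℂ → E} {c : ℂ} {R : ℝ}
    (hF : ContinuousOn (Function.uncurry F) (univ ×ˢ sphere c |R|)) :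
    Continuous fun x => ∮ z in C(c, R), F x z := by
  refine intervalIntegral.continuous_parametric_intervalIntegral_of_continuous'
    (f := fun x θ => deriv (circleMap c R) θ • F x (circleMap c R θ)) ?_ 0 (2 * π)
  have hderiv : Continuous (deriv (circleMap c R)) := by
    rw [funext (deriv_circleMap c R)]
    exact (continuous_circleMap 0 R).mul continuous_const
  exact (hderiv.comp continuous_snd).smul
    (hF.comp_continuous (continuous_fst.prodMk ((continuous_circleMap c R).comp continuous_snd))
      fun p => ⟨mem_univ _, circleMap_mem_sphere' c R p.2⟩)

lemma add_mul_ne_zero_of_norm_lt {a b c : ℂ} (hc : ‖c‖ = 1) (h : ‖b‖ < ‖a‖) : a + c * b ≠ 0 :=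
  fun h0 => h.ne' (by rw [eq_neg_of_add_eq_zero_left h0, norm_neg, norm_mul, hc, one_mul])

lemma continuousOn_logDeriv_add_exp_mul {A B : ℂ → ℂ} {s K : Set ℂ} (hs : IsOpen s)
    (hA : DifferentiableOn ℂ A s) (hB : DifferentiableOn ℂ B s) (hK : K ⊆ s)
    (hBA : ∀ z ∈ K, ‖B z‖ < ‖A z‖) :
    ContinuousOn (Function.uncurry fun (t : ℝ) => logDeriv fun z => A z + exp (t * I) * B z)
      (univ ×ˢ K) := by
  have hexp : Continuous fun p : ℝ × ℂ => exp (p.1 * I) := by fun_prop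
  have hsnd : MapsTo (Prod.snd : ℝ × ℂ → ℂ) (univ ×ˢ K) s := fun p hp => hK hp.2
  have hcomp {G : ℂ → ℂ} (hG : ContinuousOn G s) :
      ContinuousOn (fun p : ℝ × ℂ => G p.2) (univ ×ˢ K) :=
    hG.comp continuous_snd.continuousOn hsnd
  refine ContinuousOn.congr (f := fun p => (deriv A p.2 + exp (p.1 * I) * deriv B p.2) /
      (A p.2 + exp (p.1 * I) * B p.2)) ?_ fun p hp => ?_
  · refine ((hcomp (hA.deriv hs).continuousOn).add (hexp.continuousOn.mul
      (hcomp (hB.deriv hs).continuousOn))).div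
      ((hcomp hA.continuousOn).add (hexp.continuousOn.mul (hcomp hB.continuousOn))) ?_
    exact fun p hp => add_mul_ne_zero_of_norm_lt (norm_exp_ofReal_mul_I p.1) (hBA p.2 hp.2)
  · have hds : s ∈ 𝓝 p.2 := hs.mem_nhds (hK hp.2)
    have hderiv : deriv (fun z => A z + exp (p.1 * I) * B z) p.2 =
        deriv A p.2 + exp (p.1 * I) * deriv B p.2 := ((hA.differentiableAt hds).hasDerivAt.add
      ((hB.differentiableAt hds).hasDerivAt.const_mul (exp (p.1 * I)))).deriv
    simp only [Function.uncurry, logDeriv_apply, hderiv]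

lemma eq_of_continuous_natCast {X : Type*} [TopologicalSpace X] [PreconnectedSpace X]
    {N : X → ℕ} (hN : Continuous fun x => (N x : ℂ)) (x y : X) : N x = N y :=
  PreconnectedSpace.constant inferInstance
    (Nat.isClosedEmbedding_coe_real.continuous_iff.2
      ((continuous_re.comp hN).congr fun x => by simp))

lemma critSum_of_eqOn_gradC {u : ℂ → ℝ} {f : ℂ → ℂ} {c : ℂ} (hc : c ≠ 0)
    (hu : EqOn (gradC u) (fun z => c * f z) (ball 0 1)) {S : Finset ℂ} {m : ℂ → ℕ}
    (hS : (↑S : Set ℂ) = {z | z ∈ ball (0 : ℂ) 1 ∧ f z = 0})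
    (hm : ∀ z ∈ S, VanishOrder f z (m z)) : CritSum u (∑ z ∈ S, m z) := by
  refine ⟨S, m, ?_, fun z hz => ?_, rfl⟩
  · rw [hS]
    refine Set.ext fun z => and_congr_right fun hz => ?_
    rw [← gradC_eq_zero_iff, hu hz, mul_eq_zero, or_iff_right hc]
  · obtain ⟨h, hh, hhz, hfh⟩ := hm z hz
    have hzb : z ∈ ball (0 : ℂ) 1 := by
      have hz' := Finset.mem_coe.2 hz
      rw [hS] at hz'
      exact hz'.1
    refine ⟨fun w => c * h w, analyticAt_const.mul hh, mul_ne_zero hc hhz, ?_⟩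
    filter_upwards [hfh, isOpen_ball.mem_nhds hzb] with w hw hwb
    simp only [hu hwb, hw]
    ring

theorem exists_sum_analyticOrderNatAt_zeros_add_exp_mul_eq {A B : ℂ → ℂ} {c : ℂ} {r R : ℝ}
    (hr : 0 ≤ r) (hrR : r < R) (hA : DifferentiableOn ℂ A (ball c R))
    (hB : DifferentiableOn ℂ B (ball c R))
    (hBA : ∀ z ∈ ball c R, r ≤ dist z c → ‖B z‖ < ‖A z‖) :
    ∃ M : ℕ, ∀ t : ℝ, ∃ S : Finset ℂ,
      (↑S : Set ℂ) = {z | z ∈ ball c R ∧ A z + exp (t * I) * B z = 0} ∧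
      (∀ z ∈ S, VanishOrder (fun w => A w + exp (t * I) * B w) z
        (analyticOrderNatAt (fun w => A w + exp (t * I) * B w) z)) ∧
      ∑ z ∈ S, analyticOrderNatAt (fun w => A w + exp (t * I) * B w) z = M := by
  have hzeros (t : ℝ) := exists_finset_zeros_circleIntegral_logDeriv hr hrR
    (f := fun w => A w + exp (t * I) * B w) (hA.add (hB.const_mul (exp (t * I)))) fun z hz hrz =>
      add_mul_ne_zero_of_norm_lt (norm_exp_ofReal_mul_I t) (hBA z hz hrz)
  choose S hS hord hcount using hzeros
  set N : ℝ → ℕ := fun t => ∑ z ∈ S t, analyticOrderNatAt (fun w => A w + exp (t * I) * B w) z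
  have hN : Continuous fun t => (N t : ℂ) := by
    have hsph : sphere c |r| ⊆ ball c R := by
      simpa [abs_of_nonneg hr] using sphere_subset_closedBall.trans (closedBall_subset_ball hrR)
    have hcont := continuous_circleIntegral (continuousOn_logDeriv_add_exp_mul isOpen_ball hA hB
      hsph fun z hz => hBA z (hsph hz) (by rw [mem_sphere, abs_of_nonneg hr] at hz; exact hz.ge))
    refine (hcont.const_smul (2 * π * I)⁻¹).congr fun t => ?_
    rw [Pi.smul_apply, smul_eq_mul, hcount t, inv_mul_cancel_left₀ (by simp [Real.pi_ne_zero])]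
    simp [N]
  exact ⟨N 0, fun t => ⟨S t, hS t, hord t, eq_of_continuous_natCast hN t 0⟩⟩

lemma norm_derivG_lt_norm_derivH {U : ℂ → ℂ} {z : ℂ} (hU : DifferentiableAt ℝ U z)
    (hjac : 0 < jacDetB U z) : ‖derivG U z‖ < ‖derivH U z‖ := by
  rw [jacDetB_eq_norm_derivH_sq_sub_norm_derivG_sq hU] at hjac
  exact lt_of_pow_lt_pow_left₀ 2 (norm_nonneg _) (by linarith)

/-- The number of critical points of `u_α`, counted with multiplicity, is finite and
independent of `α`. -/
theorem critSum_finite_and_independent (U : ℂ → ℂ)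
    (hU1 : ContDiffOn ℝ 1 U (closedBall (0:ℂ) 1))
    (hharm : HarmMapOn U (ball (0:ℂ) 1))
    (hjac : ∀ z ∈ sphere (0:ℂ) 1, 0 < jacDet U z) :
    ∃ M : ℕ, ∀ α ∈ Icc (0:ℝ) (2 * Real.pi),
      CritSum (fun z => Real.cos α * (U z).re + Real.sin α * (U z).im) M := by
  obtain ⟨r, ⟨hr0, hr1⟩, hpos⟩ := exists_radius_forall_pos_of_pos_on_sphere
    (continuousOn_jacDet hU1) hjac
  have hdiff : ∀ z ∈ ball (0 : ℂ) 1, DifferentiableAt ℝ U z := fun z hz =>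
    (hU1.differentiableOn one_ne_zero z (ball_subset_closedBall hz)).differentiableAt
      (closedBall_mem_nhds_of_mem hz)
  obtain ⟨M, hM⟩ := exists_sum_analyticOrderNatAt_zeros_add_exp_mul_eq hr0.le hr1
    (hharm.differentiableOn_derivH isOpen_ball) (hharm.differentiableOn_derivG isOpen_ball)
    fun z hz hrz => norm_derivG_lt_norm_derivH (hdiff z hz)
      (jacDet_eq_jacDetB hz ▸ hpos z (ball_subset_closedBall hz) (by simpa using hrz))
  refine ⟨M, fun α _ => ?_⟩
  obtain ⟨S, hS, hord, rfl⟩ := hM (2 * α)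
  exact critSum_of_eqOn_gradC (exp_ne_zero (-α * I))
    (fun z hz => gradC_cos_mul_add_sin_mul (hdiff z hz) α) hS hord
end

section
/- Let u ∈ C¹ up to the boundary of the unit disk B be harmonic in B with ∇u ≠ 0 on ∂B. Let ũ be a harmonic conjugate of u and f = u + i·ũ. Then the sum M of the multiplicities of the critical points of u in B equals WN(f(∂B)) − 1, where WN denotes the winding number (1/2π)∮_{∂B} d arg(∂f/∂θ) of the tangent vector of the closed curve f|∂B. -/
open Complex Metric Set MeasureTheory Filter

/-!
On the unit circle `d/dθ f(e^{iθ}) = i e^{iθ} F(e^{iθ})`, where `F = u_x - i u_y` is the boundary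
value of `f'` (the Cauchy–Riemann equations pass to the closed disk by continuity). So the tangent
winds once more than `F`. Inside the disk `F` vanishes exactly at the critical points of `u`;
dividing out the factors `(w - z)^{m z}` leaves a continuous nonvanishing function on the closed
disk, which has a continuous logarithm and hence winds zero times, while each `e^{iθ} - z` winds
once. Thus `WN = M + 1`.
-/

open scoped Real ComplexConjugate Topology

def IsArgLift (γ : ℝ → ℂ) (a : ℝ → ℝ) : Prop :=
  Continuous a ∧ ∀ θ, γ θ = ‖γ θ‖ * exp (a θ * I)

def HasWinding (γ : ℝ → ℂ) (k : ℤ) : Prop :=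
  ∃ a : ℝ → ℝ, IsArgLift γ a ∧ a (2 * π) = a 0 + k * (2 * π)

theorem tangentWinding_iff_hasWinding_deriv {c : ℝ → ℂ} {n : ℤ} :
    TangentWinding c n ↔ HasWinding (deriv c) n := by
  simp only [TangentWinding, HasWinding, IsArgLift, and_assoc]

section ArgLift

variable {γ γ₁ γ₂ : ℝ → ℂ} {a b a₁ a₂ : ℝ → ℝ}

theorem IsArgLift.mul (h₁ : IsArgLift γ₁ a₁) (h₂ : IsArgLift γ₂ a₂) :
    IsArgLift (fun θ => γ₁ θ * γ₂ θ) (fun θ => a₁ θ + a₂ θ) := by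
  refine ⟨h₁.1.add h₂.1, fun θ => ?_⟩
  simp only [norm_mul, ofReal_add, add_mul, exp_add]
  nth_rw 1 [h₁.2 θ, h₂.2 θ]
  push_cast
  ring

theorem IsArgLift.sub_mem_zmultiples (ha : IsArgLift γ a) (hb : IsArgLift γ b) {θ : ℝ}
    (hθ : γ θ ≠ 0) : a θ - b θ ∈ AddSubgroup.zmultiples (2 * π) := by
  have hnorm : (‖γ θ‖ : ℂ) ≠ 0 := by exact_mod_cast norm_ne_zero_iff.mpr hθ
  have hexp : exp (a θ * I) = exp (b θ * I) :=
    mul_left_cancel₀ hnorm ((ha.2 θ).symm.trans (hb.2 θ))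
  obtain ⟨k, hk⟩ := exp_eq_exp_iff_exists_int.mp hexp
  refine ⟨k, ?_⟩
  have : ((a θ - b θ : ℝ) : ℂ) = ((k • (2 * π) : ℝ) : ℂ) := by
    apply mul_right_cancel₀ I_ne_zero
    push_cast
    linear_combination hk
  exact_mod_cast this.symm

theorem IsArgLift.sub_eq_sub_zero (ha : IsArgLift γ a) (hb : IsArgLift γ b)
    (hγ : ∀ θ, γ θ ≠ 0) (θ : ℝ) : a θ - b θ = a 0 - b 0 :=
  isPreconnected_univ.constant_of_mapsTo
    (SetLike.isDiscrete_iff_discreteTopology.mpr inferInstance) (ha.1.sub hb.1).continuousOn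
    (fun t _ => ha.sub_mem_zmultiples hb (hγ t)) (mem_univ θ) (mem_univ 0)

end ArgLift

section Winding

variable {γ γ₁ γ₂ : ℝ → ℂ} {k l k₁ k₂ : ℤ}

theorem HasWinding.mul (h₁ : HasWinding γ₁ k₁) (h₂ : HasWinding γ₂ k₂) :
    HasWinding (fun θ => γ₁ θ * γ₂ θ) (k₁ + k₂) := by
  obtain ⟨a₁, ha₁, hk₁⟩ := h₁
  obtain ⟨a₂, ha₂, hk₂⟩ := h₂
  exact ⟨_, ha₁.mul ha₂, by push_cast; linarith⟩

theorem HasWinding.pow (h : HasWinding γ k) (j : ℕ) : HasWinding (fun θ => γ θ ^ j) (j * k) := by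
  induction j with
  | zero => exact ⟨0, ⟨continuous_const, fun θ => by simp⟩, by simp⟩
  | succ j ih => simpa only [pow_succ, Nat.cast_succ, add_one_mul] using ih.mul h

theorem HasWinding.prod {ι : Type*} {s : Finset ι} {γ : ι → ℝ → ℂ} {k : ι → ℤ}
    (h : ∀ i ∈ s, HasWinding (γ i) (k i)) :
    HasWinding (fun θ => ∏ i ∈ s, γ i θ) (∑ i ∈ s, k i) := by
  classical
  induction s using Finset.induction_on with
  | empty => exact ⟨0, ⟨continuous_const, fun θ => by simp⟩, by simp⟩
  | insert j s hj ih =>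
    simp only [Finset.prod_insert hj, Finset.sum_insert hj]
    exact (h j (Finset.mem_insert_self j s)).mul
      (ih fun i hi => h i (Finset.mem_insert_of_mem hi))

theorem HasWinding.unique (hk : HasWinding γ k) (hl : HasWinding γ l) (hγ : ∀ θ, γ θ ≠ 0) :
    k = l := by
  obtain ⟨a, ha, hak⟩ := hk
  obtain ⟨b, hb, hbl⟩ := hl
  have hdiff := ha.sub_eq_sub_zero hb hγ (2 * π)
  have : (k : ℝ) = l := by
    apply mul_right_cancel₀ Real.two_pi_pos.ne'
    linarith
  exact_mod_cast this

theorem hasWinding_const (c : ℂ) : HasWinding (fun _ => c) 0 :=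
  ⟨fun _ => arg c, ⟨continuous_const, fun _ => (norm_mul_exp_arg_mul_I c).symm⟩, by simp⟩

theorem hasWinding_exp_mul_I : HasWinding (fun θ : ℝ => exp (θ * I)) 1 :=
  ⟨id, ⟨continuous_id, fun θ => by simp [norm_exp_ofReal_mul_I]⟩, by simp⟩

end Winding

theorem Convex.exists_continuousOn_exp_eq {E : Type*} [NormedAddCommGroup E] [NormedSpace ℝ E]
    {s : Set E} (hs : Convex ℝ s) {G : E → ℂ} (hG : ContinuousOn G s) (h0 : ∀ z ∈ s, G z ≠ 0) :
    ∃ L : E → ℂ, ContinuousOn L s ∧ ∀ z ∈ s, exp (L z) = G z := by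
  rcases s.eq_empty_or_nonempty with rfl | ⟨z₀, hz₀⟩
  · exact ⟨0, continuousOn_empty _, fun _ h => h.elim⟩
  have := hs.contractibleSpace ⟨z₀, hz₀⟩
  have := hs.locallyPathConnectedSpace
  obtain ⟨L, ⟨-, hL⟩, -⟩ := isCoveringMapOn_exp.existsUnique_continuousMap_lifts
    ⟨s.domRestrict G, hG.domRestrict⟩ (a₀ := ⟨z₀, hz₀⟩) (exp_log (h0 z₀ hz₀)) fun z => h0 z z.2
  classical
  refine ⟨fun z => if hz : z ∈ s then L ⟨z, hz⟩ else 0, ?_, fun z hz => ?_⟩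
  · rw [continuousOn_iff_continuous_domRestrict]
    convert L.continuous with z
    simp
  · simpa [hz] using congrFun hL ⟨z, hz⟩

theorem exp_mul_I_mem_sphere (θ : ℝ) : exp (θ * I) ∈ sphere (0 : ℂ) 1 := by
  simp [norm_exp_ofReal_mul_I]

theorem hasWinding_zero_of_continuousOn_closedBall {G : ℂ → ℂ}
    (hG : ContinuousOn G (closedBall 0 1)) (h0 : ∀ z ∈ closedBall (0 : ℂ) 1, G z ≠ 0) :
    HasWinding (fun θ : ℝ => G (exp (θ * I))) 0 := by
  obtain ⟨L, hLc, hL⟩ := (convex_closedBall (0 : ℂ) 1).exists_continuousOn_exp_eq hG h0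
  have hmem (θ : ℝ) : exp (θ * I) ∈ closedBall (0 : ℂ) 1 :=
    sphere_subset_closedBall (exp_mul_I_mem_sphere θ)
  refine ⟨fun θ => (L (exp (θ * I))).im, ⟨?_, fun θ => ?_⟩, ?_⟩
  · exact continuous_im.comp (hLc.comp_continuous (by fun_prop) hmem)
  · dsimp only
    rw [← hL _ (hmem θ), norm_exp, ofReal_exp, ← exp_add, re_add_im]
  · simp [exp_two_pi_mul_I]

theorem hasWinding_exp_mul_I_sub {ζ : ℂ} (hζ : ‖ζ‖ < 1) :
    HasWinding (fun θ : ℝ => exp (θ * I) - ζ) 1 := by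
  have hne : ∀ z ∈ closedBall (0 : ℂ) 1, 1 - ζ * conj z ≠ 0 := by
    intro z hz h
    have : ‖ζ * conj z‖ < 1 := by
      rw [norm_mul, RCLike.norm_conj]
      exact mul_lt_one_of_nonneg_of_lt_one_left (norm_nonneg _) hζ (mem_closedBall_zero_iff.mp hz)
    rw [← sub_eq_zero.mp h, norm_one] at this
    exact lt_irrefl _ this
  have hfactor : HasWinding (fun θ : ℝ => exp (θ * I) * (1 - ζ * conj (exp (θ * I)))) 1 :=
    hasWinding_exp_mul_I.mul
      (hasWinding_zero_of_continuousOn_closedBall (by fun_prop) hne)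
  convert hfactor using 2 with θ
  rw [mul_sub, mul_one, mul_left_comm, mul_conj, normSq_eq_norm_sq, norm_exp_ofReal_mul_I]
  simp

theorem prod_sub_pow_ne_zero {R : Type*} [CommRing R] [IsDomain R] {S : Finset R} (m : R → ℕ)
    {w : R} (hw : w ∉ S) : ∏ y ∈ S, (w - y) ^ m y ≠ 0 :=
  Finset.prod_ne_zero_iff.mpr fun _ hy =>
    pow_ne_zero _ (sub_ne_zero.mpr (ne_of_mem_of_not_mem hy hw).symm)

theorem ContinuousOn.exists_eq_prod_sub_pow_mul {K : Set ℂ} {F : ℂ → ℂ} (hF : ContinuousOn F K)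
    (S : Finset ℂ) (m : ℂ → ℕ)
    (hloc : ∀ z ∈ S, ∃ g : ℂ → ℂ, ContinuousAt g z ∧ g z ≠ 0 ∧
      ∀ᶠ w in 𝓝 z, F w = (w - z) ^ m z * g w)
    (hzero : ∀ w ∈ K, F w = 0 → w ∈ S) :
    ∃ h : ℂ → ℂ, ContinuousOn h K ∧ (∀ w ∈ K, h w ≠ 0) ∧
      ∀ w ∈ K, F w = (∏ z ∈ S, (w - z) ^ m z) * h w := by
  classical
  choose! g hgc hg0 hgF using hloc
  set p : ℂ → ℂ := fun w => ∏ y ∈ S, (w - y) ^ m y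
  set q : ℂ → ℂ → ℂ := fun z w => ∏ y ∈ S.erase z, (w - y) ^ m y
  have hp_eq {z} (hz : z ∈ S) (w : ℂ) : p w = (w - z) ^ m z * q z w :=
    (Finset.mul_prod_erase S (fun y => (w - y) ^ m y) hz).symm
  have hq0 (z : ℂ) : q z z ≠ 0 := prod_sub_pow_ne_zero m (Finset.notMem_erase z S)
  have hp0 {w} (hw : w ∉ S) : p w ≠ 0 := prod_sub_pow_ne_zero m hw
  have hq_cont (z : ℂ) : Continuous (q z) := by fun_prop
  set h : ℂ → ℂ := fun w => if w ∈ S then g w w / q w w else F w / p w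
  have h_near_zero {z} (hz : z ∈ S) : h =ᶠ[𝓝 z] fun w => g z w / q z w := by
    have hoff : ∀ᶠ w in 𝓝 z, w ∉ S.erase z :=
      (S.erase z).finite_toSet.isClosed.isOpen_compl.mem_nhds (by simp)
    filter_upwards [hgF z hz, hoff] with w hFw hw
    by_cases hwz : w = z
    · simp [h, hwz, hz]
    · have hwS : w ∉ S := fun hwS => hw (Finset.mem_erase.mpr ⟨hwz, hwS⟩)
      simp only [h, if_neg hwS, hFw, hp_eq hz]
      exact mul_div_mul_left _ _ (pow_ne_zero _ (sub_ne_zero.mpr hwz))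
  have h_off_zeros {w} (hw : w ∉ S) : h =ᶠ[𝓝 w] fun w => F w / p w := by
    filter_upwards [S.finite_toSet.isClosed.isOpen_compl.mem_nhds (by simpa using hw)] with v hv
    simp [h, show v ∉ S by simpa using hv]
  refine ⟨h, fun w hw => ?_, fun w hw => ?_, fun w hw => ?_⟩
  · by_cases hwS : w ∈ S
    · exact (((hgc w hwS).div (hq_cont w).continuousAt (hq0 w)).congr
        (h_near_zero hwS).symm).continuousWithinAt
    · exact ((hF w hw).div (by fun_prop : Continuous p).continuousWithinAt
        (hp0 hwS)).congr_of_eventuallyEq (nhdsWithin_le_nhds (h_off_zeros hwS))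
          (h_off_zeros hwS).self_of_nhds
  · by_cases hwS : w ∈ S
    · simpa [h, hwS] using div_ne_zero (hg0 w hwS) (hq0 w)
    · simpa [h, hwS] using div_ne_zero (fun h0 => hwS (hzero w hw h0)) (hp0 hwS)
  · change F w = p w * h w
    by_cases hwS : w ∈ S
    · rw [(hgF w hwS).self_of_nhds, hp_eq hwS]
      simp only [h, if_pos hwS]
      field_simp [hq0 w]
    · simp only [h, if_neg hwS]
      rw [mul_div_cancel₀ _ (hp0 hwS)]

noncomputable def complexGrad (L : ℂ →L[ℝ] ℝ) : ℂ := (L 1 : ℂ) - (L I : ℂ) * I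

theorem ContinuousLinearMap.ext_one_I {M : Type*} [AddCommGroup M] [Module ℝ M]
    [TopologicalSpace M] {L L' : ℂ →L[ℝ] M} (h1 : L 1 = L' 1) (hI : L I = L' I) : L = L' :=
  ContinuousLinearMap.coe_injective <| Complex.basisOneI.ext fun i => by
    fin_cases i <;> simpa

theorem complexGrad_eq_zero_iff {L : ℂ →L[ℝ] ℝ} : complexGrad L = 0 ↔ L = 0 := by
  refine ⟨fun h => ?_, fun h => by simp [complexGrad, h]⟩
  simp only [complexGrad, Complex.ext_iff, sub_re, ofReal_re, mul_re, I_re, mul_zero, ofReal_im,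
    I_im, mul_one, sub_self, sub_zero, zero_re, sub_im, mul_im, add_zero, zero_sub, zero_im,
    neg_eq_zero] at h
  exact ContinuousLinearMap.ext_one_I (by simpa using h.1) (by simpa using h.2)

noncomputable def gradCWithin (u : ℂ → ℝ) (s : Set ℂ) (z : ℂ) : ℂ :=
  complexGrad (fderivWithin ℝ u s z)

section ComplexGradient

variable {u v : ℂ → ℝ} {s : Set ℂ} {z : ℂ}

theorem gradCWithin_of_mem_nhds (h : s ∈ 𝓝 z) : gradCWithin u s z = gradC u z := by
  rw [gradCWithin, fderivWithin_of_mem_nhds h]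
  rfl

theorem ContDiffOn.continuousOn_gradCWithin (hu : ContDiffOn ℝ 1 u s) (hs : UniqueDiffOn ℝ s) :
    ContinuousOn (gradCWithin u s) s := by
  have hD := hu.continuousOn_fderivWithin hs le_rfl
  unfold gradCWithin complexGrad
  fun_prop

theorem HasFDerivWithinAt.ofReal_add_mul_I {Du Dv : ℂ →L[ℝ] ℝ}
    (hu : HasFDerivWithinAt u Du s z) (hv : HasFDerivWithinAt v Dv s z)
    (h1 : Dv 1 = -Du I) (hI : Dv I = Du 1) :
    HasFDerivWithinAt (fun w => (u w : ℂ) + v w * I)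
      ((1 : ℂ →L[ℝ] ℂ).smulRight (complexGrad Du)) s z := by
  have hD : (1 : ℂ →L[ℝ] ℂ).smulRight (complexGrad Du) = ofRealCLM.comp Du + Dv.smulRight I := by
    refine ContinuousLinearMap.ext_one_I ?_ ?_
    · simp only [complexGrad, ContinuousLinearMap.smulRight_apply, one_apply_eq_self, smul_eq_mul,
        one_mul, add_apply, ContinuousLinearMap.comp_apply, ofRealCLM_apply, h1, neg_smul,
        real_smul]
      ring
    · simp only [complexGrad, ContinuousLinearMap.smulRight_apply, one_apply_eq_self, smul_eq_mul,
        add_apply, ContinuousLinearMap.comp_apply, ofRealCLM_apply, hI, real_smul]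
      linear_combination -(Du I : ℂ) * I_sq
  have hf : (fun w => (u w : ℂ) + v w * I) = fun w => ofRealCLM (u w) + v w • I := by
    simp [real_smul]
  rw [hD, hf]
  exact (ofRealCLM.hasFDerivAt.comp_hasFDerivWithinAt z hu).add (hv.smul_const I)

end ComplexGradient

section ClosedUnitDisk

variable {u v : ℂ → ℝ}

theorem uniqueDiffOn_closedBall_zero_one : UniqueDiffOn ℝ (closedBall (0 : ℂ) 1) :=
  uniqueDiffOn_convex (convex_closedBall 0 1) (by rw [interior_closedBall _ one_ne_zero]; simp)

theorem IsConjOn.fderivWithin_closedBall (hu : ContDiffOn ℝ 1 u (closedBall 0 1))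
    (hv : ContDiffOn ℝ 1 v (closedBall 0 1)) (hconj : IsConjOn u v (ball 0 1)) {z : ℂ}
    (hz : z ∈ closedBall (0 : ℂ) 1) :
    fderivWithin ℝ v (closedBall 0 1) z 1 = -fderivWithin ℝ u (closedBall 0 1) z I ∧
      fderivWithin ℝ v (closedBall 0 1) z I = fderivWithin ℝ u (closedBall 0 1) z 1 := by
  have hDu := hu.continuousOn_fderivWithin uniqueDiffOn_closedBall_zero_one le_rfl
  have hDv := hv.continuousOn_fderivWithin uniqueDiffOn_closedBall_zero_one le_rfl
  have hball {φ : ℂ → ℝ} {w : ℂ} (hw : w ∈ ball (0 : ℂ) 1) :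
      fderivWithin ℝ φ (closedBall 0 1) w = fderiv ℝ φ w :=
    fderivWithin_of_mem_nhds (closedBall_mem_nhds_of_mem hw)
  have extend {φ ψ : ℂ → ℝ} (hφ : ContinuousOn φ (closedBall 0 1))
      (hψ : ContinuousOn ψ (closedBall 0 1)) (h : EqOn φ ψ (ball 0 1)) :
      EqOn φ ψ (closedBall 0 1) :=
    h.of_subset_closure hφ hψ ball_subset_closedBall (closure_ball 0 one_ne_zero).ge
  constructor
  · refine extend (hDv.clm_apply continuousOn_const) (hDu.clm_apply continuousOn_const).neg
      (fun w hw => ?_) hz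
    simp only [hball hw, (hconj.2 w hw).1, Pi.neg_apply]
  · refine extend (hDv.clm_apply continuousOn_const) (hDu.clm_apply continuousOn_const)
      (fun w hw => ?_) hz
    simp only [hball hw, (hconj.2 w hw).2]

theorem hasDerivAt_comp_exp_mul_I {f : ℂ → ℂ} (hu : ContDiffOn ℝ 1 u (closedBall 0 1))
    (hv : ContDiffOn ℝ 1 v (closedBall 0 1)) (hconj : IsConjOn u v (ball 0 1))
    (hf : ∀ z, f z = (u z : ℂ) + (v z : ℂ) * I) (θ : ℝ) :
    HasDerivAt (fun t : ℝ => f (exp (t * I)))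
      (I * exp (θ * I) * gradCWithin u (closedBall 0 1) (exp (θ * I))) θ := by
  have hmem (t : ℝ) : exp (t * I) ∈ closedBall (0 : ℂ) 1 :=
    sphere_subset_closedBall (exp_mul_I_mem_sphere t)
  obtain ⟨h1, hI⟩ := hconj.fderivWithin_closedBall hu hv (hmem θ)
  have hf' := HasFDerivWithinAt.ofReal_add_mul_I
    ((hu.differentiableOn one_ne_zero _ (hmem θ)).hasFDerivWithinAt)
    ((hv.differentiableOn one_ne_zero _ (hmem θ)).hasFDerivWithinAt) h1 hI
  rw [← funext hf] at hf'
  have hcirc : HasDerivAt (fun t : ℝ => exp (t * I)) (exp (θ * I) * I) θ := by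
    simpa using ((hasDerivAt_id θ).ofReal_comp.mul_const I).cexp
  refine (hf'.comp_hasDerivAt θ hcirc (Eventually.of_forall hmem)).congr_deriv ?_
  rw [ContinuousLinearMap.smulRight_apply, one_apply_eq_self, smul_eq_mul,
    gradCWithin]
  ring

end ClosedUnitDisk

theorem ContinuousOn.hasWinding_sum_of_zeros {F : ℂ → ℂ} (hF : ContinuousOn F (closedBall 0 1))
    {S : Finset ℂ} (hS : ∀ z ∈ S, z ∈ ball (0 : ℂ) 1) (m : ℂ → ℕ)
    (hloc : ∀ z ∈ S, ∃ g : ℂ → ℂ, ContinuousAt g z ∧ g z ≠ 0 ∧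
      ∀ᶠ w in 𝓝 z, F w = (w - z) ^ m z * g w)
    (hzero : ∀ w ∈ closedBall (0 : ℂ) 1, F w = 0 → w ∈ S) :
    HasWinding (fun θ : ℝ => F (exp (θ * I))) (∑ z ∈ S, (m z : ℤ)) := by
  obtain ⟨h, hh, hh0, hFh⟩ := hF.exists_eq_prod_sub_pow_mul S m hloc hzero
  have := (HasWinding.prod fun z hz =>
    (hasWinding_exp_mul_I_sub (mem_ball_zero_iff.mp (hS z hz))).pow (m z)).mul
      (hasWinding_zero_of_continuousOn_closedBall hh hh0)
  simp only [mul_one, add_zero] at this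
  convert this using 2 with θ
  exact hFh _ (sphere_subset_closedBall (exp_mul_I_mem_sphere θ))

theorem CritSum.hasWinding_gradCWithin {u : ℂ → ℝ} {M : ℕ} (hM : CritSum u M)
    (hu : ContDiffOn ℝ 1 u (closedBall 0 1))
    (hsphere : ∀ z ∈ sphere (0 : ℂ) 1, gradCWithin u (closedBall 0 1) z ≠ 0) :
    HasWinding (fun θ : ℝ => gradCWithin u (closedBall 0 1) (exp (θ * I))) M := by
  obtain ⟨S, m, hS, hord, rfl⟩ := hM
  have hS_iff {z : ℂ} : z ∈ S ↔ z ∈ ball (0 : ℂ) 1 ∧ fderiv ℝ u z = 0 := by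
    rw [← Finset.mem_coe, hS, mem_ofPred_eq]
  have hball {z : ℂ} (hz : z ∈ ball (0 : ℂ) 1) : gradCWithin u (closedBall 0 1) z = gradC u z :=
    gradCWithin_of_mem_nhds (closedBall_mem_nhds_of_mem hz)
  push_cast
  refine (hu.continuousOn_gradCWithin uniqueDiffOn_closedBall_zero_one).hasWinding_sum_of_zeros
    (fun z hz => (hS_iff.mp hz).1) m (fun z hz => ?_) (fun w hw h0 => ?_)
  · obtain ⟨g, hg, hg0, hgF⟩ := hord z hz
    refine ⟨g, hg.continuousAt, hg0, ?_⟩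
    filter_upwards [hgF, isOpen_ball.mem_nhds (hS_iff.mp hz).1] with w hw hwb
    rw [hball hwb, hw]
  · rcases (mem_closedBall_zero_iff.mp hw).lt_or_eq with hlt | heq
    · have hwb := mem_ball_zero_iff.mpr hlt
      exact hS_iff.mpr ⟨hwb, complexGrad_eq_zero_iff.mp ((hball hwb).symm.trans h0)⟩
    · exact absurd h0 (hsphere w (mem_sphere_zero_iff_norm.mpr heq))

theorem critSum_eq_winding_sub_one_general (u uConj : ℂ → ℝ) (f : ℂ → ℂ)
    (hu1 : ContDiffOn ℝ 1 u (closedBall (0:ℂ) 1))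
    (hgrad : ∀ z ∈ sphere (0:ℂ) 1, fderivWithin ℝ u (closedBall (0:ℂ) 1) z ≠ 0)
    (huConj1 : ContDiffOn ℝ 1 uConj (closedBall (0:ℂ) 1))
    (hconj : IsConjOn u uConj (ball (0:ℂ) 1))
    (hf : ∀ z, f z = (u z : ℂ) + (uConj z : ℂ) * Complex.I) :
    ∀ (M : ℕ) (n : ℤ), CritSum u M →
      TangentWinding (fun θ : ℝ => f (Complex.exp ((θ : ℂ) * Complex.I))) n →
      (M : ℤ) = n - 1 := by
  intro M n hM htw
  set F := gradCWithin u (closedBall 0 1)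
  have hF_sphere : ∀ z ∈ sphere (0 : ℂ) 1, F z ≠ 0 :=
    fun z hz h0 => hgrad z hz (complexGrad_eq_zero_iff.mp h0)
  have hderiv : deriv (fun θ : ℝ => f (exp (θ * I))) =
      fun θ : ℝ => I * exp (θ * I) * F (exp (θ * I)) :=
    funext fun θ => (hasDerivAt_comp_exp_mul_I hu1 huConj1 hconj hf θ).deriv
  have hwind : HasWinding (deriv fun θ : ℝ => f (exp (θ * I))) (0 + 1 + M) := by
    rw [hderiv]
    exact ((hasWinding_const I).mul hasWinding_exp_mul_I).mul
      (hM.hasWinding_gradCWithin hu1 hF_sphere)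
  have hderiv_ne (θ : ℝ) : deriv (fun θ : ℝ => f (exp (θ * I))) θ ≠ 0 := by
    rw [hderiv]
    exact mul_ne_zero (mul_ne_zero I_ne_zero (exp_ne_zero _))
      (hF_sphere _ (exp_mul_I_mem_sphere θ))
  have := (tangentWinding_iff_hasWinding_deriv.mp htw).unique hwind hderiv_ne
  omega

/-- The multiplicity count of critical points of `u` equals `WN(f(∂B)) − 1`,
where `f = u + i·uConj`. -/
theorem critSum_eq_winding_sub_one (u uConj : ℂ → ℝ) (f : ℂ → ℂ)
    (hu1 : ContDiffOn ℝ 1 u (closedBall (0:ℂ) 1))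
    (hharm : HarmOn u (ball (0:ℂ) 1))
    (hgrad : ∀ z ∈ sphere (0:ℂ) 1, fderivWithin ℝ u (closedBall (0:ℂ) 1) z ≠ 0)
    (huConj1 : ContDiffOn ℝ 1 uConj (closedBall (0:ℂ) 1))
    (hconj : IsConjOn u uConj (ball (0:ℂ) 1))
    (hf : ∀ z, f z = (u z : ℂ) + (uConj z : ℂ) * Complex.I) :
    ∀ (M : ℕ) (n : ℤ), CritSum u M →
      TangentWinding (fun θ : ℝ => f (Complex.exp ((θ : ℂ) * Complex.I))) n →
      (M : ℤ) = n - 1 :=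
  critSum_eq_winding_sub_one_general u uConj f hu1 hgrad huConj1 hconj hf
end

section
/- Let Φ = (φ,ψ) : [a,b] → ℝ² be a C¹ curve with φ' ≠ 0 on (a,b) and φ'(a) = φ'(b) = 0, and let g : ψ([a,b]) → ℝ be C¹ with g' > 0 on ψ((a,b)). Define Φ̃ = (φ, g∘ψ). Then the total variation of the argument of the tangent along the two curves coincide: ∫_a^b d arg(Φ̃') = ∫_a^b d arg(Φ'). -/
open Complex Metric Set MeasureTheory Filter

/-!
On `(a, b)` the two tangent vectors `Φ'` and `Ψ'` have the same nonzero real part, and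
`Im Ψ' = g' · Im Φ'` with `g' > 0`, so `Re (Φ' · conj Ψ') > 0`: the angle `α - β` between them
never reaches `π` modulo `2π`. At the endpoints both tangents are vertical, and by continuity
they point the same way, so `α - β` is a multiple of `2π` there. By the intermediate value
theorem it is the same multiple at both ends.
-/

theorem Real.eq_of_cos_eq_one_of_cos_ne_neg_one {δ : ℝ → ℝ} {a b : ℝ} (hab : a ≤ b)
    (hδ : ContinuousOn δ (Icc a b)) (hne : ∀ t ∈ Ioo a b, Real.cos (δ t) ≠ -1)
    (ha : Real.cos (δ a) = 1) (hb : Real.cos (δ b) = 1) : δ a = δ b := by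
  obtain ⟨m, hm⟩ := (Real.cos_eq_one_iff _).mp ha
  obtain ⟨n, hn⟩ := (Real.cos_eq_one_iff _).mp hb
  by_contra hab'
  have hπ := Real.pi_pos
  obtain ⟨y, hy, hcos⟩ : ∃ y ∈ uIcc (δ a) (δ b), Real.cos y = -1 := by
    rcases lt_or_gt_of_ne (fun h : m = n => hab' (by rw [← hm, ← hn, h])) with hmn | hmn
    · have : (m : ℝ) + 1 ≤ n := by exact_mod_cast hmn
      refine ⟨m * (2 * Real.pi) + Real.pi, mem_uIcc.mpr (Or.inl ⟨by linarith, by nlinarith⟩), ?_⟩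
      rw [Real.cos_add_pi, Real.cos_int_mul_two_pi]
    · have : (n : ℝ) + 1 ≤ m := by exact_mod_cast hmn
      refine ⟨n * (2 * Real.pi) + Real.pi, mem_uIcc.mpr (Or.inr ⟨by linarith, by nlinarith⟩), ?_⟩
      rw [Real.cos_add_pi, Real.cos_int_mul_two_pi]
  rw [← uIcc_of_le hab] at hδ
  obtain ⟨t, ht, rfl⟩ := intermediate_value_uIcc hδ hy
  rw [uIcc_of_le hab] at ht
  rcases eq_endpoints_or_mem_Ioo_of_mem_Icc ht with rfl | rfl | ht
  · linarith
  · linarith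
  · exact hne t ht hcos

theorem Real.cos_sub_eq_one_of_cos_eq_zero {x y : ℝ} (hx : Real.cos x = 0) (hy : Real.cos y = 0)
    (hxy : 0 ≤ Real.cos (x - y)) : Real.cos (x - y) = 1 := by
  have hsx := Real.sin_sq_add_cos_sq x
  have hsy := Real.sin_sq_add_cos_sq y
  rw [Real.cos_sub, hx, hy] at hxy ⊢
  nlinarith

theorem Complex.re_eq_norm_mul_cos_of_eq {z : ℂ} {θ : ℝ}
    (hz : z = ‖z‖ * Complex.exp (θ * I)) : z.re = ‖z‖ * Real.cos θ := by
  conv_lhs => rw [hz]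
  rw [re_ofReal_mul, exp_ofReal_mul_I_re]

theorem Complex.im_eq_norm_mul_sin_of_eq {z : ℂ} {θ : ℝ}
    (hz : z = ‖z‖ * Complex.exp (θ * I)) : z.im = ‖z‖ * Real.sin θ := by
  conv_lhs => rw [hz]
  rw [im_ofReal_mul, exp_ofReal_mul_I_im]

theorem Complex.norm_mul_norm_mul_cos_sub {z w : ℂ} {α β : ℝ}
    (hz : z = ‖z‖ * Complex.exp (α * I)) (hw : w = ‖w‖ * Complex.exp (β * I)) :
    ‖z‖ * ‖w‖ * Real.cos (α - β) = z.re * w.re + z.im * w.im := by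
  rw [re_eq_norm_mul_cos_of_eq hz, re_eq_norm_mul_cos_of_eq hw,
    im_eq_norm_mul_sin_of_eq hz, im_eq_norm_mul_sin_of_eq hw, Real.cos_sub]
  ring

theorem Complex.cos_sub_pos_of_re_eq {z w : ℂ} {α β k : ℝ}
    (hz : z = ‖z‖ * Complex.exp (α * I)) (hw : w = ‖w‖ * Complex.exp (β * I))
    (hre : w.re = z.re) (hre₀ : z.re ≠ 0) (him : w.im = k * z.im) (hk : 0 ≤ k) :
    0 < Real.cos (α - β) := by
  have hnorm : 0 < ‖z‖ * ‖w‖ := mul_pos (norm_pos_iff.mpr fun h => hre₀ (by simp [h]))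
    (norm_pos_iff.mpr fun h => hre₀ (by simp [← hre, h]))
  refine pos_of_mul_pos_right ?_ hnorm.le
  rw [norm_mul_norm_mul_cos_sub hz hw, hre, him]
  nlinarith [sq_pos_of_ne_zero hre₀, mul_nonneg hk (sq_nonneg z.im)]

theorem Complex.cos_eq_zero_of_re_eq_zero {z : ℂ} {θ : ℝ} (h0 : z ≠ 0)
    (hz : z = ‖z‖ * Complex.exp (θ * I)) (hre : z.re = 0) : Real.cos θ = 0 := by
  rw [re_eq_norm_mul_cos_of_eq hz] at hre
  exact (mul_eq_zero.mp hre).resolve_left (norm_ne_zero_iff.mpr h0)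

theorem arc_argument_invariance_general (a b : ℝ) (hab : a < b)
    (Φ Φ' : ℝ → ℂ) (g' : ℝ → ℝ) (Ψ' : ℝ → ℂ)
    (hφ : ∀ t ∈ Ioo a b, (Φ' t).re ≠ 0)
    (hpa : (Φ' a).re = 0) (hpb : (Φ' b).re = 0)
    (hT : ∀ t ∈ Icc a b, Φ' t ≠ 0)
    (hg' : ∀ t ∈ Ioo a b, 0 < g' ((Φ t).im))
    (hΨ' : ∀ t, Ψ' t = ((Φ' t).re : ℂ) + ((g' ((Φ t).im) * (Φ' t).im : ℝ) : ℂ) * Complex.I)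
    (hT2 : ∀ t ∈ Icc a b, Ψ' t ≠ 0)
    (α β : ℝ → ℝ) (hαc : ContinuousOn α (Icc a b)) (hβc : ContinuousOn β (Icc a b))
    (hα : ∀ t ∈ Icc a b, Φ' t = (‖Φ' t‖ : ℂ) * Complex.exp ((α t : ℂ) * Complex.I))
    (hβ : ∀ t ∈ Icc a b, Ψ' t = (‖Ψ' t‖ : ℂ) * Complex.exp ((β t : ℂ) * Complex.I)) :
    β b - β a = α b - α a := by
  have hreΨ' : ∀ t, (Ψ' t).re = (Φ' t).re := fun t => by simp [hΨ']
  have himΨ' : ∀ t, (Ψ' t).im = g' ((Φ t).im) * (Φ' t).im := fun t => by simp [hΨ']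
  have hpos : ∀ t ∈ Ioo a b, 0 < Real.cos (α t - β t) := fun t ht =>
    cos_sub_pos_of_re_eq (hα t (Ioo_subset_Icc_self ht)) (hβ t (Ioo_subset_Icc_self ht))
      (hreΨ' t) (hφ t ht) (himΨ' t) (hg' t ht).le
  have hend : ∀ t ∈ Icc a b, (Φ' t).re = 0 → Real.cos (α t - β t) = 1 := by
    intro t ht hre
    refine Real.cos_sub_eq_one_of_cos_eq_zero (cos_eq_zero_of_re_eq_zero (hT t ht) (hα t ht) hre)
      (cos_eq_zero_of_re_eq_zero (hT2 t ht) (hβ t ht) (hreΨ' t ▸ hre)) ?_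
    have hcont : ContinuousOn (fun s => Real.cos (α s - β s)) (Icc a b) :=
      Real.continuous_cos.comp_continuousOn (hαc.sub hβc)
    have hcl : t ∈ closure (Ioo a b) := by rwa [closure_Ioo hab.ne]
    exact ContinuousWithinAt.closure_le hcl continuousWithinAt_const
      ((hcont t ht).mono Ioo_subset_Icc_self) fun s hs => (hpos s hs).le
  have hδ := Real.eq_of_cos_eq_one_of_cos_ne_neg_one hab.le (hαc.sub hβc)
    (fun t ht h => by linarith [hpos t ht, show Real.cos (α t - β t) = -1 from h])
    (hend a (left_mem_Icc.mpr hab.le) hpa) (hend b (right_mem_Icc.mpr hab.le) hpb)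
  simp only [Pi.sub_apply] at hδ
  linarith

/-- Shearing the second component of an arc with vertical tangents at the endpoints
does not change the total variation of the argument of the tangent. -/
theorem arc_argument_invariance (a b : ℝ) (hab : a < b)
    (Φ Φ' : ℝ → ℂ) (g g' : ℝ → ℝ) (Ψ' : ℝ → ℂ)
    (hΦ : ∀ t ∈ Icc a b, HasDerivWithinAt Φ (Φ' t) (Icc a b) t)
    (hΦ'c : ContinuousOn Φ' (Icc a b))
    (hφ : ∀ t ∈ Ioo a b, (Φ' t).re ≠ 0)
    (hpa : (Φ' a).re = 0) (hpb : (Φ' b).re = 0)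
    (hT : ∀ t ∈ Icc a b, Φ' t ≠ 0)
    (hg : ∀ y ∈ (fun t => (Φ t).im) '' Icc a b,
      HasDerivWithinAt g (g' y) ((fun t => (Φ t).im) '' Icc a b) y)
    (hg' : ∀ t ∈ Ioo a b, 0 < g' ((Φ t).im))
    (hΨ' : ∀ t, Ψ' t = ((Φ' t).re : ℂ) + ((g' ((Φ t).im) * (Φ' t).im : ℝ) : ℂ) * Complex.I)
    (hT2 : ∀ t ∈ Icc a b, Ψ' t ≠ 0)
    (α β : ℝ → ℝ) (hαc : ContinuousOn α (Icc a b)) (hβc : ContinuousOn β (Icc a b))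
    (hα : ∀ t ∈ Icc a b, Φ' t = (‖Φ' t‖ : ℂ) * Complex.exp ((α t : ℂ) * Complex.I))
    (hβ : ∀ t ∈ Icc a b, Ψ' t = (‖Ψ' t‖ : ℂ) * Complex.exp ((β t : ℂ) * Complex.I)) :
    β b - β a = α b - α a :=
  arc_argument_invariance_general a b hab Φ Φ' g' Ψ' hφ hpa hpb hT hg' hΨ' hT2 α β hαc hβc hα hβ
end

section
/- Let Φ : ∂B → γ be a homeomorphism onto a simple closed curve γ bounding a Jordan domain D, and let U be the (continuous up to the boundary) harmonic extension of Φ to the unit disk. If U is a local homeomorphism at every point P ∈ ∂B (i.e., injective on G ∩ closure(B) for some neighborhood G of P), then there exists ρ ∈ (0,1) such that U is injective on the annulus closure(B) \ B_ρ(0). -/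
open Complex Metric Set MeasureTheory Filter

/-! Near a boundary point `U` is injective by assumption; for two distinct boundary points
the boundary values differ, so by continuity `U` separates points near them. Compactness of the
circle turns these local facts into injectivity on a whole neighbourhood of the circle, and such
a neighbourhood contains a closed annulus. -/

open scoped Topology

theorem Set.InjOn.exists_mem_nhdsSet_injOn_inter {X Y : Type*} [TopologicalSpace X]
    [TopologicalSpace Y] [T2Space Y] {f : X → Y} {s K : Set X} (inj : InjOn f s)
    (sc : IsCompact s) (hsK : s ⊆ K) (fc : ContinuousOn f K)
    (loc : ∀ x ∈ s, ∃ u ∈ 𝓝 x, InjOn f (u ∩ K)) :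
    ∃ t ∈ 𝓝ˢ s, InjOn f (t ∩ K) := by
  have hpairs : ∀ p ∈ s ×ˢ s, ∀ᶠ q in 𝓝 p, q.1 ∈ K → q.2 ∈ K → f q.1 = f q.2 → q.1 = q.2 := by
    rintro ⟨x, y⟩ ⟨hx, hy⟩
    rcases eq_or_ne x y with rfl | hne
    · obtain ⟨u, hu, hf⟩ := loc x hx
      filter_upwards [prod_mem_nhds hu hu] with q hq hq₁ hq₂
      exact hf ⟨hq.1, hq₁⟩ ⟨hq.2, hq₂⟩
    · have hsep : ∀ᶠ q in 𝓝[K ×ˢ K] (x, y), f q.1 ≠ f q.2 :=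
        ((fc x (hsK hx)).prodMap (fc y (hsK hy))).eventually
          (isClosed_diagonal.isOpen_compl.mem_nhds (inj.ne hx hy hne))
      filter_upwards [eventually_nhdsWithin_iff.1 hsep] with q hq hq₁ hq₂ heq
      exact absurd heq (hq ⟨hq₁, hq₂⟩)
  rw [← eventually_nhdsSet_iff_forall, sc.nhdsSet_prod_eq sc] at hpairs
  obtain ⟨t, ht, hinj⟩ :=
    (eventually_prod_self_iff (r := fun x y ↦ x ∈ K → y ∈ K → f x = f y → x = y)).1 hpairs
  exact ⟨t, ht, fun x hx y hy ↦ hinj x hx.1 y hy.1 hx.2 hy.2⟩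

theorem exists_closedBall_diff_ball_subset_of_mem_nhdsSet_sphere {E : Type*}
    [NormedAddCommGroup E] [NormedSpace ℝ E] [ProperSpace E] {r : ℝ} (hr : 0 < r) {V : Set E}
    (hV : V ∈ 𝓝ˢ (sphere (0 : E) r)) :
    ∃ ρ, 0 < ρ ∧ ρ < r ∧ closedBall (0 : E) r \ ball 0 ρ ⊆ V := by
  obtain ⟨δ, hδ, hδV⟩ := (hasBasis_nhdsSet_thickening (isCompact_sphere (0 : E) r)).mem_iff.1 hV
  refine ⟨max (r / 2) (r - δ / 2), by positivity, max_lt (by linarith) (by linarith), ?_⟩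
  rintro z ⟨hzr, hzρ⟩
  simp only [mem_closedBall, mem_ball, dist_zero_right, not_lt, max_le_iff] at hzr hzρ
  have hz : ‖z‖ ≠ 0 := by linarith
  refine hδV (mem_thickening_iff.2 ⟨(r / ‖z‖) • z, ?_, ?_⟩)
  · rw [mem_sphere_zero_iff_norm, norm_smul, Real.norm_of_nonneg (by positivity),
      div_mul_cancel₀ _ hz]
  · have hsmul : z - (r / ‖z‖) • z = (1 - r / ‖z‖) • z := by rw [sub_smul, one_smul]
    have hratio : 1 ≤ r / ‖z‖ := by rw [le_div_iff₀ (by positivity)]; linarith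
    calc dist z ((r / ‖z‖) • z) = r - ‖z‖ := by
          rw [dist_eq_norm, hsmul, norm_smul, Real.norm_eq_abs, abs_of_nonpos (by linarith),
            neg_sub, sub_mul, div_mul_cancel₀ _ hz, one_mul]
      _ < δ := by linarith

theorem injective_on_annulus_general (Φ U : ℂ → ℂ) (D : Set ℂ)
    (hΦbij : Set.BijOn Φ (sphere (0:ℂ) 1) (frontier D))
    (hUc : ContinuousOn U (closedBall (0:ℂ) 1))
    (hbd : Set.EqOn U Φ (sphere (0:ℂ) 1))
    (hloc : ∀ P ∈ sphere (0:ℂ) 1, LocalHomeoAt U P) :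
    ∃ ρ : ℝ, 0 < ρ ∧ ρ < 1 ∧ Set.InjOn U (closedBall (0:ℂ) 1 \ ball (0:ℂ) ρ) := by
  obtain ⟨V, hV, hinj⟩ := Set.InjOn.exists_mem_nhdsSet_injOn_inter
    (hΦbij.injOn.congr hbd.symm) (isCompact_sphere 0 1) sphere_subset_closedBall hUc hloc
  obtain ⟨ρ, hρ₀, hρ₁, hsub⟩ := exists_closedBall_diff_ball_subset_of_mem_nhdsSet_sphere one_pos hV
  exact ⟨ρ, hρ₀, hρ₁, hinj.mono (subset_inter hsub sdiff_subset)⟩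

/-- If `U` is a local homeomorphism at every boundary point, then it is injective
on some annulus near the boundary. -/
theorem injective_on_annulus (Φ U : ℂ → ℂ) (D : Set ℂ)
    (hD : IsOpen D) (hDb : Bornology.IsBounded D) (hDconn : IsConnected D)
    (hΦc : ContinuousOn Φ (sphere (0:ℂ) 1))
    (hΦbij : Set.BijOn Φ (sphere (0:ℂ) 1) (frontier D))
    (hUc : ContinuousOn U (closedBall (0:ℂ) 1))
    (hharm : HarmMapOn U (ball (0:ℂ) 1))
    (hbd : Set.EqOn U Φ (sphere (0:ℂ) 1))
    (hloc : ∀ P ∈ sphere (0:ℂ) 1, LocalHomeoAt U P) :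
    ∃ ρ : ℝ, 0 < ρ ∧ ρ < 1 ∧ Set.InjOn U (closedBall (0:ℂ) 1 \ ball (0:ℂ) ρ) :=
  injective_on_annulus_general Φ U D hΦbij hUc hbd hloc
end
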